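/- The derivative of the GaU marginal scoring function ρ(r) = smax((τ² − r²)/(2σ²), 0) satisfies −ρ'(r)/r = (1/σ²)·sigmoid((τ² − r²)/(2σ²)) for all r > 0; i.e., the IRLS weight is proportional to the posterior inlier probability. -/

import Mathlib

/-- The GaU marginal score `ρ(r) = smax((τ²−r²)/(2σ²), 0)` has derivative `ρ'(r)`
with `−ρ'(r)/r = (1/σ²)·sigmoid((τ²−r²)/(2σ²))` for all `r > 0`: the IRLS weight
is proportional to the posterior inlier probability. -/
theorem gau_irls_weight_is_posterior
    (σ τ : ℝ) (hσ : 0 < σ) (hτ : 0 < τ)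
    (r : ℝ) (hr : 0 < r) :
    ∃ D : ℝ,
      HasDerivAt
        (fun s : ℝ => Real.log (Real.exp ((τ ^ 2 - s ^ 2) / (2 * σ ^ 2)) + Real.exp 0)) D r ∧
      -D / r = 1 / σ ^ 2 * (1 / (1 + Real.exp (-((τ ^ 2 - r ^ 2) / (2 * σ ^ 2))))) := by
  set a := (τ ^ 2 - r ^ 2) / (2 * σ ^ 2) with ha
  have hσ2 : (σ ^ 2) ≠ 0 := by positivity
  have h1 : HasDerivAt (fun s : ℝ => (τ ^ 2 - s ^ 2) / (2 * σ ^ 2)) (-r / σ ^ 2) r := by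
    have : HasDerivAt (fun s : ℝ => (τ ^ 2 - s ^ 2) / (2 * σ ^ 2))
        ((0 - 2 * r) / (2 * σ ^ 2)) r := by
      have hs : HasDerivAt (fun s : ℝ => τ ^ 2 - s ^ 2) (0 - 2 * r) r := by
        have := ((hasDerivAt_pow 2 r)).const_sub (τ ^ 2)
        simpa using this
      exact hs.div_const _
    convert this using 1
    field_simp
    ring
  have h2 : HasDerivAt (fun s : ℝ => Real.exp ((τ ^ 2 - s ^ 2) / (2 * σ ^ 2)) + Real.exp 0)
      (Real.exp a * (-r / σ ^ 2)) r := ((h1.exp).add_const _)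
  have hpos : 0 < Real.exp a + Real.exp 0 := by positivity
  have h3 := h2.log (ne_of_gt hpos)
  refine ⟨_, h3, ?_⟩
  rw [← ha]
  rw [Real.exp_zero, Real.exp_neg]
  have he : Real.exp a ≠ 0 := Real.exp_ne_zero a
  field_simp
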